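/- arXiv:2008.05459 — 3 statements merged into one kernel-verified Lean document; each statement's English description precedes it below -/
import Mathlib

section
/- Let μ be a probability measure on a measurable space α, let G be a finite nonempty family of measurable functions g : α → [0, 1], and let N be a positive integer. For every t > 0, the probability, over an i.i.d. sample S = (X_1, …, X_N) drawn from μ^N, that sup_{g∈G} |E_μ[g] − (1/N)Σ_{i=1}^N g(X_i)| exceeds E_S[sup_{g∈G} |E_μ[g] − (1/N)Σ_{i=1}^N g(X_i)|] + t is at most exp(−2·N·t²). -/
/-!
Replacing one sample point changes the uniform deviation by at most `1 / N`, since it moves each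
empirical mean by at most `1 / N` and a supremum of functions inherits a common bound on their
increments. McDiarmid's inequality turns such bounded differences `cᵢ` into sub-Gaussianity of
`f - 𝔼 f` with variance proxy `∑ cᵢ² / 4`: integrating out the first coordinate, the conditional
mean has oscillation at most `c₀` and is sub-Gaussian by Hoeffding's lemma, while each section is
sub-Gaussian by induction on `N`. The Chernoff bound for variance proxy `1 / (4N)` is
`exp (-2 N t²)`.
-/

open MeasureTheory ProbabilityTheory
open scoped NNReal

lemma exists_forall_mem_Icc_of_forall_sub_le {ι : Type*} [Nonempty ι] {g : ι → ℝ} {c : ℝ}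
    (h : ∀ x y, g x - g y ≤ c) : ∃ a, ∀ x, g x ∈ Set.Icc a (a + c) := by
  obtain ⟨x₀⟩ := ‹Nonempty ι›
  have hbdd : BddBelow (Set.range g) := ⟨g x₀ - c, by rintro _ ⟨x, rfl⟩; linarith [h x₀ x]⟩
  refine ⟨⨅ x, g x, fun x => ⟨ciInf_le hbdd x, ?_⟩⟩
  have : g x - c ≤ ⨅ y, g y := le_ciInf fun y => by linarith [h x y]
  linarith

namespace ProbabilityTheory.HasSubgaussianMGF

variable {Ω Ω' : Type*} [MeasurableSpace Ω] [MeasurableSpace Ω'] {c cX cY : ℝ≥0}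

lemma of_measurePreserving {μ : Measure Ω} {μ' : Measure Ω'} {T : Ω' → Ω}
    (hT : MeasurePreserving T μ' μ) {X : Ω → ℝ} (hX : Measurable X)
    (h : HasSubgaussianMGF (X ∘ T) c μ') : HasSubgaussianMGF X c μ := by
  rwa [← id_map_iff hX.aemeasurable, ← hT.map_eq, Measure.map_map hX hT.measurable,
    id_map_iff (hX.comp hT.measurable).aemeasurable]

lemma prod_add {μ : Measure Ω} {ν : Measure Ω'} [SFinite μ] [SFinite ν] {X : Ω → ℝ}
    {Y : Ω × Ω' → ℝ} (hX : HasSubgaussianMGF X cX μ)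
    (hY : ∀ x, HasSubgaussianMGF (fun y => Y (x, y)) cY ν)
    (hint : ∀ t, Integrable (fun p => Real.exp (t * (X p.1 + Y p))) (μ.prod ν)) :
    HasSubgaussianMGF (fun p => X p.1 + Y p) (cX + cY) (μ.prod ν) where
  integrable_exp_mul := hint
  mgf_le t := calc
    mgf (fun p => X p.1 + Y p) (μ.prod ν) t
        = ∫ x, Real.exp (t * X x) * mgf (fun y => Y (x, y)) ν t ∂μ := by
          rw [mgf, integral_prod _ (hint t)]
          simp only [mgf, mul_add, Real.exp_add, integral_const_mul]
      _ ≤ ∫ x, Real.exp (t * X x) * Real.exp (cY * t ^ 2 / 2) ∂μ :=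
          integral_mono_of_nonneg (ae_of_all _ fun x => mul_nonneg (Real.exp_pos _).le mgf_nonneg)
            ((hX.integrable_exp_mul t).mul_const _)
            (ae_of_all _ fun x => mul_le_mul_of_nonneg_left ((hY x).mgf_le t) (Real.exp_pos _).le)
      _ = mgf X μ t * Real.exp (cY * t ^ 2 / 2) := integral_mul_const _ _
      _ ≤ Real.exp (cX * t ^ 2 / 2) * Real.exp (cY * t ^ 2 / 2) := by
          gcongr; exact hX.mgf_le t
      _ = Real.exp (↑(cX + cY) * t ^ 2 / 2) := by
          rw [← Real.exp_add]; push_cast; ring_nf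

end ProbabilityTheory.HasSubgaussianMGF

def HasBoundedDifferences {ι α : Type*} [DecidableEq ι] (f : (ι → α) → ℝ) (c : ι → ℝ≥0) :
    Prop :=
  ∀ i X y, f (Function.update X i y) - f X ≤ c i

lemma HasBoundedDifferences.comp_cons {α : Type*} {N : ℕ} {f : (Fin (N + 1) → α) → ℝ}
    {c : Fin (N + 1) → ℝ≥0} (h : HasBoundedDifferences f c) (x : α) :
    HasBoundedDifferences (fun Y => f (Fin.cons x Y)) (fun i => c i.succ) := fun i Y y => by
  simpa only [Fin.cons_update] using h i.succ (Fin.cons x Y) y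

lemma HasBoundedDifferences.sub_le_of_cons {α : Type*} {N : ℕ} {f : (Fin (N + 1) → α) → ℝ}
    {c : Fin (N + 1) → ℝ≥0} (h : HasBoundedDifferences f c) (x x' : α) (Y : Fin N → α) :
    f (Fin.cons x Y) - f (Fin.cons x' Y) ≤ c 0 := by
  simpa only [Fin.update_cons_zero] using h 0 (Fin.cons x' Y) x

section McDiarmid

variable {α : Type*} [MeasurableSpace α] (μ : Measure α)

lemma MeasurableEquiv.piFinSuccAbove_symm_zero_apply {N : ℕ} (p : α × (Fin N → α)) :
    (MeasurableEquiv.piFinSuccAbove (fun _ : Fin (N + 1) => α) 0).symm p = Fin.cons p.1 p.2 := by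
  simp [MeasurableEquiv.piFinSuccAbove_symm_apply, Fin.insertNthEquiv, Fin.insertNth_zero']

lemma measurePreserving_finCons [SigmaFinite μ] (N : ℕ) :
    MeasurePreserving (fun p : α × (Fin N → α) => (Fin.cons p.1 p.2 : Fin (N + 1) → α))
      (μ.prod (Measure.pi fun _ => μ)) (Measure.pi fun _ => μ) := by
  convert (measurePreserving_piFinSuccAbove (fun _ => μ) 0).symm _ using 1
  exact funext fun p => (MeasurableEquiv.piFinSuccAbove_symm_zero_apply p).symm

lemma integral_pi_succ_eq_integral_prod [SigmaFinite μ] {N : ℕ} (F : (Fin (N + 1) → α) → ℝ) :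
    ∫ X, F X ∂(Measure.pi fun _ => μ) =
      ∫ p, F (Fin.cons p.1 p.2) ∂(μ.prod (Measure.pi fun _ => μ)) := by
  simpa only [MeasurableEquiv.piFinSuccAbove_symm_zero_apply] using
    (((measurePreserving_piFinSuccAbove (fun _ => μ) 0).symm _).integral_comp' F).symm

variable [IsProbabilityMeasure μ] {M : ℝ}

lemma hasSubgaussianMGF_integral_cons_sub_integral {N : ℕ} {f : (Fin (N + 1) → α) → ℝ}
    {c : Fin (N + 1) → ℝ≥0} (hf : Measurable f) (hM : ∀ X, |f X| ≤ M)
    (hc : HasBoundedDifferences f c) :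
    HasSubgaussianMGF
      (fun x => (∫ Y, f (Fin.cons x Y) ∂Measure.pi fun _ => μ) - ∫ Z, f Z ∂Measure.pi fun _ => μ)
      ((c 0 / 2) ^ 2) μ := by
  set π := Measure.pi fun _ : Fin N => μ
  set g : α → ℝ := fun x => ∫ Y, f (Fin.cons x Y) ∂π
  have hf_cons : Measurable fun p : α × (Fin N → α) => f (Fin.cons p.1 p.2) :=
    hf.comp (measurePreserving_finCons μ N).measurable
  have hsec_int : ∀ x, Integrable (fun Y => f (Fin.cons x Y)) π := fun x =>
    .of_bound (hf_cons.comp measurable_prodMk_left).aestronglyMeasurable M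
      (ae_of_all _ fun _ => hM _)
  have hg_meas : Measurable g := hf_cons.stronglyMeasurable.integral_prod_right'.measurable
  have hg_mean : ∫ x, g x ∂μ = ∫ Z, f Z ∂Measure.pi fun _ => μ := by
    rw [integral_pi_succ_eq_integral_prod, integral_prod _ (.of_bound hf_cons.aestronglyMeasurable M
      (ae_of_all _ fun p => hM _))]
  have : Nonempty α := nonempty_of_isProbabilityMeasure μ
  obtain ⟨a, ha⟩ := exists_forall_mem_Icc_of_forall_sub_le fun x x' =>
    show g x - g x' ≤ c 0 from
    calc g x - g x' = ∫ Y, (f (Fin.cons x Y) - f (Fin.cons x' Y)) ∂π :=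
          (integral_sub (hsec_int x) (hsec_int x')).symm
      _ ≤ ∫ _, (c 0 : ℝ) ∂π :=
          integral_mono ((hsec_int x).sub (hsec_int x')) (integrable_const _)
            (hc.sub_le_of_cons x x')
      _ = c 0 := by simp
  have := hasSubgaussianMGF_of_mem_Icc (μ := μ) hg_meas.aemeasurable (ae_of_all _ ha)
  rwa [hg_mean, add_sub_cancel_left, NNReal.nnnorm_eq] at this

theorem hasSubgaussianMGF_sub_integral_of_hasBoundedDifferences {N : ℕ}
    {f : (Fin N → α) → ℝ} {c : Fin N → ℝ≥0} (hf : Measurable f) (hM : ∀ X, |f X| ≤ M)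
    (hc : HasBoundedDifferences f c) :
    HasSubgaussianMGF (fun X => f X - ∫ Z, f Z ∂Measure.pi fun _ => μ) (∑ i, (c i / 2) ^ 2)
      (Measure.pi fun _ => μ) := by
  induction N with
  | zero =>
    have hconst : ∀ X : Fin 0 → α, f X - ∫ Z, f Z ∂(Measure.pi fun _ => μ) = 0 := fun X => by
      rw [integral_congr_ae (ae_of_all _ fun Z => congrArg f (Subsingleton.elim Z X))]
      simp
    simpa using HasSubgaussianMGF.fun_zero.congr (ae_of_all _ fun X => (hconst X).symm)
  | succ N ih =>
    set m := ∫ Z, f Z ∂Measure.pi fun _ => μ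
    set g : α → ℝ := fun x => ∫ Y, f (Fin.cons x Y) ∂Measure.pi fun _ => μ
    have hf_cons : Measurable fun p : α × (Fin N → α) => f (Fin.cons p.1 p.2) :=
      hf.comp (measurePreserving_finCons μ N).measurable
    have hg_fst : Measurable fun p : α × (Fin N → α) => g p.1 :=
      hf_cons.stronglyMeasurable.integral_prod_right'.measurable.comp measurable_fst
    have hsec : ∀ x, HasSubgaussianMGF (fun Y => f (Fin.cons x Y) - g x)
        (∑ i : Fin N, (c i.succ / 2) ^ 2) (Measure.pi fun _ => μ) := fun x =>
      ih (hf_cons.comp measurable_prodMk_left) (fun Y => hM _) (hc.comp_cons x)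
    refine .of_measurePreserving (measurePreserving_finCons μ N) (hf.sub_const m) ?_
    rw [Fin.sum_univ_succ]
    refine ((hasSubgaussianMGF_integral_cons_sub_integral μ hf hM hc).prod_add
      (Y := fun p => f (Fin.cons p.1 p.2) - g p.1) hsec fun t => ?_).congr
        (ae_of_all _ fun p => by simp only [Function.comp_apply, g, m]; ring)
    refine integrable_exp_mul_of_mem_Icc (a := -M - m) (b := M - m)
      ((hg_fst.sub_const m).add (hf_cons.sub hg_fst)).aemeasurable (ae_of_all _ fun p => ?_)
    have := abs_le.1 (hM (Fin.cons p.1 p.2))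
    simp only [Set.mem_Icc, g]
    constructor <;> linarith

theorem measureReal_ge_integral_add_le_of_hasBoundedDifferences {N : ℕ}
    {f : (Fin N → α) → ℝ} {c : Fin N → ℝ≥0}
    (hf : Measurable f) (hM : ∀ X, |f X| ≤ M) (hc : HasBoundedDifferences f c)
    {t : ℝ} (ht : 0 ≤ t) :
    (Measure.pi fun _ => μ).real {X | (∫ Z, f Z ∂Measure.pi fun _ => μ) + t ≤ f X} ≤
      Real.exp (-2 * t ^ 2 / ∑ i, (c i : ℝ) ^ 2) := by
  have h := (hasSubgaussianMGF_sub_integral_of_hasBoundedDifferences μ hf hM hc).measure_ge_le ht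
  simp only [le_sub_iff_add_le'] at h
  convert h using 2
  push_cast
  rw [show ∑ i, ((c i : ℝ) / 2) ^ 2 = (∑ i, (c i : ℝ) ^ 2) / 4 by
    simp only [div_pow, ← Finset.sum_div]; norm_num]
  ring

end McDiarmid

lemma Finset.sup'_sub_sup'_le {ι β : Type*} [AddCommGroup β] [LinearOrder β]
    [IsOrderedAddMonoid β] {s : Finset ι} (hs : s.Nonempty) {f g : ι → β} {c : β}
    (h : ∀ i ∈ s, f i - g i ≤ c) : s.sup' hs f - s.sup' hs g ≤ c :=
  sub_le_iff_le_add.2 <| Finset.sup'_le hs f fun i hi =>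
    (sub_le_iff_le_add.1 (h i hi)).trans (add_le_add_right (Finset.le_sup' g hi) c)

lemma Fintype.sum_comp_update_sub {ι α : Type*} [Fintype ι] [DecidableEq ι] (g : α → ℝ)
    (X : ι → α) (i : ι) (y : α) :
    ∑ j, g (Function.update X i y j) - ∑ j, g (X j) = g y - g (X i) := by
  rw [← Finset.sum_sub_distrib, Finset.sum_eq_single i (fun j _ hj => by simp [hj]) (by simp)]
  simp

lemma integral_mem_Icc_zero_one {Ω : Type*} [MeasurableSpace Ω] {μ : Measure Ω}
    [IsProbabilityMeasure μ] {g : Ω → ℝ} (hg : ∀ x, g x ∈ Set.Icc 0 1) :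
    ∫ x, g x ∂μ ∈ Set.Icc 0 1 :=
  ⟨integral_nonneg fun x => (hg x).1, (integral_mono_of_nonneg (ae_of_all _ fun x => (hg x).1)
    (integrable_const 1) (ae_of_all _ fun x => (hg x).2)).trans_eq (by simp)⟩

lemma average_mem_Icc_zero_one {α : Type*} {N : ℕ} {g : α → ℝ} (hg : ∀ x, g x ∈ Set.Icc 0 1)
    (X : Fin N → α) : (1 / N : ℝ) * ∑ i, g (X i) ∈ Set.Icc 0 1 := by
  have hsum : ∑ i, g (X i) ≤ N := by
    simpa using Finset.sum_le_sum fun i (_ : i ∈ Finset.univ) => (hg (X i)).2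
  refine ⟨mul_nonneg (by positivity) (Finset.sum_nonneg fun i _ => (hg (X i)).1), ?_⟩
  rw [one_div_mul_eq_div]
  exact div_le_one_of_le₀ hsum (Nat.cast_nonneg N)

noncomputable def uniformDeviation {α : Type*} [MeasurableSpace α] (μ : Measure α)
    (G : Finset (α → ℝ)) (hG : G.Nonempty) {N : ℕ} (X : Fin N → α) : ℝ :=
  G.sup' hG fun g => |(∫ a, g a ∂μ) - (1 / N) * ∑ i, g (X i)|

section UniformDeviation

variable {α : Type*} [MeasurableSpace α] (μ : Measure α) {G : Finset (α → ℝ)}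
  (hG : G.Nonempty) {N : ℕ}

lemma measurable_uniformDeviation (hmeas : ∀ g ∈ G, Measurable g) :
    Measurable (uniformDeviation μ G hG (N := N)) := by
  have hterm : ∀ g ∈ G,
      Measurable fun X : Fin N → α => |(∫ a, g a ∂μ) - (1 / N) * ∑ i, g (X i)| :=
    fun g hg => by have := hmeas g hg; fun_prop
  have h := Finset.measurable_sup' hG hterm
  exact (funext fun X => Finset.sup'_apply hG _ X : G.sup' hG _ = uniformDeviation μ G hG) ▸ h

lemma abs_uniformDeviation_le_one [IsProbabilityMeasure μ]
    (hrange : ∀ g ∈ G, ∀ x, g x ∈ Set.Icc 0 1) (X : Fin N → α) :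
    |uniformDeviation μ G hG X| ≤ 1 := by
  have hnonneg : 0 ≤ uniformDeviation μ G hG X :=
    (abs_nonneg _).trans <| Finset.le_sup'
      (fun g : α → ℝ => |(∫ a, g a ∂μ) - (1 / N) * ∑ i, g (X i)|) hG.choose_spec
  rw [abs_of_nonneg hnonneg]
  refine Finset.sup'_le _ _ fun g hg => abs_sub_le_iff.2 ?_
  have hint := integral_mem_Icc_zero_one (μ := μ) (hrange g hg)
  have havg := average_mem_Icc_zero_one (hrange g hg) X
  constructor <;> linarith [hint.1, hint.2, havg.1, havg.2]

lemma hasBoundedDifferences_uniformDeviation (hrange : ∀ g ∈ G, ∀ x, g x ∈ Set.Icc 0 1) :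
    HasBoundedDifferences (uniformDeviation μ G hG (N := N)) fun _ => 1 / N := by
  intro i X y
  refine Finset.sup'_sub_sup'_le hG fun g hg => ?_
  have hgy := hrange g hg y
  have hgX := hrange g hg (X i)
  have hdiff : |g y - g (X i)| ≤ 1 := abs_sub_le_iff.2 ⟨by linarith [hgy.2, hgX.1],
    by linarith [hgy.1, hgX.2]⟩
  push_cast
  calc _ ≤ |(1 / N : ℝ) * ∑ j, g (Function.update X i y j) - (1 / N) * ∑ j, g (X j)| :=
        (abs_sub_abs_le_abs_sub _ _).trans_eq (by rw [sub_sub_sub_cancel_left, abs_sub_comm])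
    _ = (1 / N) * |g y - g (X i)| := by
        rw [← mul_sub, abs_mul, Fintype.sum_comp_update_sub, abs_of_nonneg (by positivity)]
    _ ≤ 1 / N := mul_le_of_le_one_right (by positivity) hdiff

end UniformDeviation

theorem uniform_deviation_concentration_general
    {α : Type*} [MeasurableSpace α] (μ : Measure α) [IsProbabilityMeasure μ]
    (G : Finset (α → ℝ)) (hG : G.Nonempty)
    (hmeas : ∀ g ∈ G, Measurable g)
    (hrange : ∀ g ∈ G, ∀ x, g x ∈ Set.Icc (0 : ℝ) 1)
    (N : ℕ) (t : ℝ) (ht : 0 < t) :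
    (Measure.pi fun _ : Fin N => μ)
      {X : Fin N → α |
        (G.sup' hG fun g => |(∫ a, g a ∂μ) - (1 / N) * ∑ i, g (X i)|) >
          (∫ Y, (G.sup' hG fun g => |(∫ a, g a ∂μ) - (1 / N) * ∑ i, g (Y i)|)
              ∂(Measure.pi fun _ : Fin N => μ)) + t }
      ≤ ENNReal.ofReal (Real.exp (-2 * N * t ^ 2)) := by
  have hconc := measureReal_ge_integral_add_le_of_hasBoundedDifferences μ
    (measurable_uniformDeviation μ hG (N := N) hmeas) (abs_uniformDeviation_le_one μ hG hrange)
    (hasBoundedDifferences_uniformDeviation μ hG hrange) ht.le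
  have hexp : -2 * t ^ 2 / ∑ _i : Fin N, ((1 / N : ℝ≥0) : ℝ) ^ 2 = -2 * N * t ^ 2 := by
    rcases N.eq_zero_or_pos with rfl | hN
    · simp
    · simp
      field_simp
  set π := Measure.pi fun _ : Fin N => μ
  set D : (Fin N → α) → ℝ := uniformDeviation μ G hG
  change π {X | D X > (∫ Y, D Y ∂π) + t} ≤ _
  calc π {X | D X > (∫ Y, D Y ∂π) + t}
      ≤ π {X | (∫ Y, D Y ∂π) + t ≤ D X} :=
        measure_mono fun X (hX : D X > _) => show _ ≤ D X from hX.le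
    _ = ENNReal.ofReal (π.real {X | (∫ Y, D Y ∂π) + t ≤ D X}) := (ofReal_measureReal).symm
    _ ≤ ENNReal.ofReal (Real.exp (-2 * N * t ^ 2)) :=
        ENNReal.ofReal_le_ofReal (hconc.trans_eq (by rw [hexp]))

/-- Hoeffding-type concentration for the uniform deviation: for a finite
nonempty family `G` of measurable `[0,1]`-valued losses, the probability
(over an i.i.d. sample of size `N` from `μ`) that the uniform deviation
exceeds its mean by more than `t` is at most `exp (-2 N t²)`. -/
theorem uniform_deviation_concentration
    {α : Type*} [MeasurableSpace α] (μ : Measure α) [IsProbabilityMeasure μ]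
    (G : Finset (α → ℝ)) (hG : G.Nonempty)
    (hmeas : ∀ g ∈ G, Measurable g)
    (hrange : ∀ g ∈ G, ∀ x, g x ∈ Set.Icc (0 : ℝ) 1)
    (N : ℕ) (hN : 0 < N) (t : ℝ) (ht : 0 < t) :
    (Measure.pi fun _ : Fin N => μ)
      {X : Fin N → α |
        (G.sup' hG fun g => |(∫ a, g a ∂μ) - (1 / N) * ∑ i, g (X i)|) >
          (∫ Y, (G.sup' hG fun g => |(∫ a, g a ∂μ) - (1 / N) * ∑ i, g (Y i)|)
              ∂(Measure.pi fun _ : Fin N => μ)) + t }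
      ≤ ENNReal.ofReal (Real.exp (-2 * N * t ^ 2)) :=
  uniform_deviation_concentration_general μ G hG hmeas hrange N t ht
end

section
/- (Talagrand's contraction lemma.) Let x_1, …, x_N be points of ℝ^n, let H be a nonempty family of functions h : ℝ^n → ℝ, and let Φ_1, …, Φ_N : ℝ → ℝ be L-Lipschitz functions. Assume the suprema below are finite. Then (1/N)·E_σ[sup_{h∈H} Σ_{i=1}^N σ_i Φ_i(h(x_i))] ≤ L·E_σ[sup_{h∈H} (1/N) Σ_{i=1}^N σ_i h(x_i)] = L·R̂_S(H). -/
/-!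
The functions `Φᵢ` are replaced by `t ↦ L * t` one coordinate at a time, and no replacement
decreases the Rademacher sum. For a single coordinate `j`, pair each sign vector with the one
flipped at `j`: the two suprema have the form `sup (a + φ ∘ u) + sup (a - φ ∘ u)`, and since
`φ (u h) - φ (u h') ≤ L * |u h - u h'|`, every pair of values is dominated by
`(a + L u)(h) + (a - L u)(h')` or by the same expression with `h` and `h'` swapped.
-/

open Finset Function

def rademacherSign (b : Bool) : ℝ := if b then 1 else -1

lemma rademacherSign_not (b : Bool) : rademacherSign (!b) = -rademacherSign b := by
  cases b <;> simp [rademacherSign]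

lemma abs_rademacherSign (b : Bool) : |rademacherSign b| = 1 := by
  cases b <;> simp [rademacherSign]

lemma rademacherSign_mul_le_abs (b : Bool) (y : ℝ) : rademacherSign b * y ≤ |y| := by
  cases b <;> simp [rademacherSign, le_abs_self, neg_le_abs]

lemma rademacherSign_decide_mul (y : ℝ) : rademacherSign (decide (0 ≤ y)) * y = |y| := by
  by_cases hy : 0 ≤ y
  · simp [rademacherSign, hy, abs_of_nonneg hy]
  · simp [rademacherSign, hy, abs_of_neg (not_le.1 hy)]

lemma iSup_add_iSup_le_of_lipschitz {β : Type*} [Nonempty β] {a u : β → ℝ} {φ : ℝ → ℝ}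
    {L s : ℝ} (hφ : ∀ y z, |φ y - φ z| ≤ L * |y - z|) (hs : |s| = 1)
    (hup : BddAbove (Set.range fun b => s * (L * u b) + a b))
    (hdown : BddAbove (Set.range fun b => -s * (L * u b) + a b)) :
    (⨆ b, s * φ (u b) + a b) + (⨆ b, -s * φ (u b) + a b) ≤
      (⨆ b, s * (L * u b) + a b) + ⨆ b, -s * (L * u b) + a b := by
  refine ciSup_add_ciSup_le fun b b' => ?_
  have hlip : s * (φ (u b) - φ (u b')) ≤ L * |s * (u b - u b')| :=
    calc s * (φ (u b) - φ (u b')) ≤ |s * (φ (u b) - φ (u b'))| := le_abs_self _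
      _ ≤ L * |u b - u b'| := by rw [abs_mul, hs, one_mul]; exact hφ _ _
      _ = L * |s * (u b - u b')| := by rw [abs_mul, hs, one_mul]
  rcases le_total 0 (s * (u b - u b')) with hpos | hneg
  · rw [abs_of_nonneg hpos] at hlip
    linarith [le_ciSup hup b, le_ciSup hdown b']
  · rw [abs_of_nonpos hneg] at hlip
    linarith [le_ciSup hup b', le_ciSup hdown b]

lemma Fintype.sum_le_sum_of_involutive {γ : Type*} [Fintype γ] {F G : γ → ℝ}
    {e : γ → γ} (he : Involutive e) (h : ∀ c, F c + F (e c) ≤ G c + G (e c)) :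
    ∑ c, F c ≤ ∑ c, G c := by
  have hsum := Finset.sum_le_sum fun c (_ : c ∈ univ) => h c
  have hF := Equiv.sum_comp he.toPerm F
  have hG := Equiv.sum_comp he.toPerm G
  rw [Involutive.coe_toPerm] at hF hG
  rw [sum_add_distrib, sum_add_distrib, hF, hG] at hsum
  linarith

lemma sum_mul_update {ι R : Type*} [Fintype ι] [DecidableEq ι] [NonUnitalNonAssocSemiring R]
    (c v : ι → R) (j : ι) (y : R) :
    ∑ i, c i * update v j y i = c j * y + ∑ i ∈ univ.erase j, c i * v i := by
  rw [← add_sum_erase _ _ (mem_univ j), update_self]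
  congr 1
  exact sum_congr rfl fun i hi => by rw [update_of_ne (ne_of_mem_erase hi)]

variable {β ι : Type*}

lemma bddAbove_rademacher_of_abs_le [Fintype ι] {f : β → ι → ℝ} {C : ι → ℝ}
    (hC : ∀ b i, |f b i| ≤ C i) (σ : ι → Bool) :
    BddAbove (Set.range fun b => ∑ i, rademacherSign (σ i) * f b i) :=
  ⟨∑ i, C i, by
    rintro _ ⟨b, rfl⟩
    exact sum_le_sum fun i _ => (rademacherSign_mul_le_abs _ _).trans (hC b i)⟩

section ContractionHybrid

variable [DecidableEq ι] {Φ : ι → ℝ → ℝ} {L : ℝ} {f : β → ι → ℝ} {S : Finset ι}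

variable (Φ L f S) in
def contractionHybrid : β → ι → ℝ :=
  fun b i => if i ∈ S then L * f b i else Φ i (f b i)

lemma contractionHybrid_eq_update {j : ι} (hj : j ∉ S) :
    contractionHybrid Φ L f S = fun b => update (contractionHybrid Φ L f S b) j (Φ j (f b j)) := by
  funext b i
  by_cases hi : i = j
  · subst hi; simp [contractionHybrid, hj]
  · simp [contractionHybrid, hi]

lemma contractionHybrid_insert {j : ι} :
    contractionHybrid Φ L f (insert j S) =
      fun b => update (contractionHybrid Φ L f S b) j (L * f b j) := by
  funext b i
  by_cases hi : i = j
  · subst hi; simp [contractionHybrid]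
  · simp [contractionHybrid, hi]

lemma abs_contractionHybrid_le {C : ℝ} (hL : 0 ≤ L)
    (hΦ : ∀ i, ∀ y z : ℝ, |Φ i y - Φ i z| ≤ L * |y - z|) (hC : ∀ b i, |f b i| ≤ C)
    (S : Finset ι) (b : β) (i : ι) : |contractionHybrid Φ L f S b i| ≤ |Φ i 0| + L * C := by
  have hLf : L * |f b i| ≤ L * C := mul_le_mul_of_nonneg_left (hC b i) hL
  by_cases hi : i ∈ S
  · simp only [contractionHybrid, hi, if_true, abs_mul, abs_of_nonneg hL]
    linarith [abs_nonneg (Φ i 0)]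
  · simp only [contractionHybrid, hi, if_false]
    have := hΦ i (f b i) 0
    rw [sub_zero] at this
    linarith [abs_sub_abs_le_abs_sub (Φ i (f b i)) (Φ i 0)]

end ContractionHybrid

section RademacherSum

variable [Fintype ι] [DecidableEq ι]

/-- `2 ^ card ι` times the Rademacher average of the sup of `∑ i, σᵢ f b i` over `b`. -/
noncomputable def rademacherSum (f : β → ι → ℝ) : ℝ :=
  ∑ σ : ι → Bool, ⨆ b, ∑ i, rademacherSign (σ i) * f b i

lemma rademacherSum_const_mul {c : ℝ} (hc : 0 ≤ c) (f : β → ι → ℝ) :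
    rademacherSum (fun b i => c * f b i) = c * rademacherSum f := by
  simp only [rademacherSum, mul_sum, Real.mul_iSup_of_nonneg hc, mul_left_comm c]

lemma exists_abs_le_of_bddAbove_rademacher {f : β → ι → ℝ}
    (hf : ∀ σ : ι → Bool, BddAbove (Set.range fun b => ∑ i, rademacherSign (σ i) * f b i)) :
    ∃ C, ∀ b i, |f b i| ≤ C := by
  choose M hM using hf
  refine ⟨∑ σ, |M σ|, fun b i => ?_⟩
  calc |f b i| ≤ ∑ k, |f b k| := single_le_sum (fun k _ => abs_nonneg (f b k)) (mem_univ i)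
    _ = ∑ k, rademacherSign (decide (0 ≤ f b k)) * f b k := by
      simp only [rademacherSign_decide_mul]
    _ ≤ M _ := hM _ ⟨b, rfl⟩
    _ ≤ ∑ σ, |M σ| :=
      (le_abs_self _).trans (single_le_sum (fun σ _ => abs_nonneg (M σ)) (mem_univ _))

lemma rademacherSum_update_le [Nonempty β] (g : β → ι → ℝ) (u : β → ℝ) (j : ι)
    {φ : ℝ → ℝ} {L : ℝ} (hφ : ∀ y z, |φ y - φ z| ≤ L * |y - z|)
    (hbdd : ∀ σ : ι → Bool, BddAbove (Set.range fun b =>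
      ∑ i, rademacherSign (σ i) * update (g b) j (L * u b) i)) :
    rademacherSum (fun b => update (g b) j (φ (u b))) ≤
      rademacherSum (fun b => update (g b) j (L * u b)) := by
  refine Fintype.sum_le_sum_of_involutive (e := fun σ => update σ j (!σ j))
    (fun σ => by simp) fun σ => ?_
  set a : β → ℝ := fun b => ∑ i ∈ univ.erase j, rademacherSign (σ i) * g b i
  have hflip : ∀ b, ∑ i ∈ univ.erase j, rademacherSign (update σ j (!σ j) i) * g b i = a b :=
    fun b => sum_congr rfl fun i hi => by rw [update_of_ne (ne_of_mem_erase hi)]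
  have hup := hbdd σ
  have hdown := hbdd (update σ j (!σ j))
  simp only [sum_mul_update, update_self, rademacherSign_not, hflip] at hup hdown ⊢
  exact iSup_add_iSup_le_of_lipschitz hφ (abs_rademacherSign _) hup hdown

theorem rademacherSum_comp_le [Nonempty β] {Φ : ι → ℝ → ℝ} {L : ℝ} {f : β → ι → ℝ}
    (hL : 0 ≤ L) (hΦ : ∀ i, ∀ y z : ℝ, |Φ i y - Φ i z| ≤ L * |y - z|)
    (hf : ∀ σ : ι → Bool, BddAbove (Set.range fun b => ∑ i, rademacherSign (σ i) * f b i)) :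
    rademacherSum (fun b i => Φ i (f b i)) ≤ L * rademacherSum f := by
  obtain ⟨C, hC⟩ := exists_abs_le_of_bddAbove_rademacher hf
  have hchain : ∀ S, rademacherSum (contractionHybrid Φ L f ∅) ≤
      rademacherSum (contractionHybrid Φ L f S) := by
    intro S
    induction S using Finset.induction_on with
    | empty => rfl
    | insert j S hj ih =>
      refine ih.trans ?_
      rw [contractionHybrid_eq_update hj, contractionHybrid_insert]
      refine rademacherSum_update_le _ _ j (hΦ j) fun σ => ?_
      have := bddAbove_rademacher_of_abs_le (abs_contractionHybrid_le hL hΦ hC (insert j S)) σ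
      rwa [contractionHybrid_insert] at this
  calc rademacherSum (fun b i => Φ i (f b i)) = rademacherSum (contractionHybrid Φ L f ∅) := by
        unfold contractionHybrid; simp only [notMem_empty, if_false]
    _ ≤ rademacherSum (contractionHybrid Φ L f univ) := hchain univ
    _ = rademacherSum (fun b i => L * f b i) := by
        unfold contractionHybrid; simp only [mem_univ, if_true]
    _ = L * rademacherSum f := rademacherSum_const_mul hL f

end RademacherSum

lemma setOf_exists_mem_eq_range {α : Type*} (H : Set α) (F : α → ℝ) :
    {r : ℝ | ∃ h ∈ H, r = F h} = Set.range fun h : H => F h := by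
  ext r
  simp [eq_comm]

theorem talagrand_contraction_general
    {n N : ℕ} (x : Fin N → (Fin n → ℝ))
    (H : Set ((Fin n → ℝ) → ℝ)) (hH : H.Nonempty)
    (L : ℝ) (hL : 0 ≤ L)
    (Φ : Fin N → ℝ → ℝ)
    (hΦ : ∀ i, ∀ a b : ℝ, |Φ i a - Φ i b| ≤ L * |a - b|)
    (hB : ∀ σ : Fin N → Bool, BddAbove
      {r : ℝ | ∃ h ∈ H, r = (1 / N) * ∑ i, (if σ i then (1 : ℝ) else -1) * h (x i)}) :
    (1 / N) * ((∑ σ : Fin N → Bool, sSup {r : ℝ | ∃ h ∈ H, r =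
        ∑ i, (if σ i then (1 : ℝ) else -1) * Φ i (h (x i))}) / 2 ^ N)
      ≤ L * ((∑ σ : Fin N → Bool, sSup {r : ℝ | ∃ h ∈ H, r =
        (1 / N) * ∑ i, (if σ i then (1 : ℝ) else -1) * h (x i)}) / 2 ^ N) := by
  have : Nonempty H := hH.to_subtype
  simp only [setOf_exists_mem_eq_range, sSup_range] at hB ⊢
  have hf : ∀ σ : Fin N → Bool,
      BddAbove (Set.range fun h : H => ∑ i, rademacherSign (σ i) * h.1 (x i)) := by
    rcases N.eq_zero_or_pos with rfl | hN
    · simp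
    · intro σ
      rw [← bddAbove_smul_iff_of_pos (by positivity : (0 : ℝ) < 1 / N), ← Set.range_smul]
      exact hB σ
  have key := rademacherSum_comp_le (f := fun (h : H) i => h.1 (x i)) hL hΦ hf
  simp only [← Real.mul_iSup_of_nonneg (by positivity : (0 : ℝ) ≤ 1 / N), ← mul_sum]
  calc _ ≤ 1 / N * (L * rademacherSum (fun (h : H) i => h.1 (x i)) / 2 ^ N) := by
        gcongr ?_ * (?_ / _)
        exact key
    _ = _ := by
      unfold rademacherSum rademacherSign
      ring

/-- Talagrand's contraction lemma: composing a function class `H` with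
coordinatewise `L`-Lipschitz functions `Φᵢ` increases the empirical
Rademacher complexity by at most a factor `L`. The Rademacher expectation is
the average over all `2^N` sign vectors. -/
theorem talagrand_contraction
    {n N : ℕ} (x : Fin N → (Fin n → ℝ))
    (H : Set ((Fin n → ℝ) → ℝ)) (hH : H.Nonempty)
    (L : ℝ) (hL : 0 ≤ L)
    (Φ : Fin N → ℝ → ℝ)
    (hΦ : ∀ i, ∀ a b : ℝ, |Φ i a - Φ i b| ≤ L * |a - b|)
    (hA : ∀ σ : Fin N → Bool, BddAbove
      {r : ℝ | ∃ h ∈ H, r = ∑ i, (if σ i then (1 : ℝ) else -1) * Φ i (h (x i))})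
    (hB : ∀ σ : Fin N → Bool, BddAbove
      {r : ℝ | ∃ h ∈ H, r = (1 / N) * ∑ i, (if σ i then (1 : ℝ) else -1) * h (x i)}) :
    (1 / N) * ((∑ σ : Fin N → Bool, sSup {r : ℝ | ∃ h ∈ H, r =
        ∑ i, (if σ i then (1 : ℝ) else -1) * Φ i (h (x i))}) / 2 ^ N)
      ≤ L * ((∑ σ : Fin N → Bool, sSup {r : ℝ | ∃ h ∈ H, r =
        (1 / N) * ∑ i, (if σ i then (1 : ℝ) else -1) * h (x i)}) / 2 ^ N) :=
  talagrand_contraction_general x H hH L hL Φ hΦ hB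
end

section
/- (Symmetrization.) Let μ be a probability measure on a measurable space α, let G be a finite nonempty family of bounded measurable functions g : α → ℝ, and let N be a positive integer. Then E_{S∼μ^N}[sup_{g∈G} (E_μ[g] − (1/N) Σ_{i=1}^N g(X_i))] ≤ 2·E_{S∼μ^N}[E_σ[sup_{g∈G} (1/N) Σ_{i=1}^N σ_i g(X_i)]], where S = (X_1, …, X_N) is an i.i.d. sample from μ and σ = (σ_1, …, σ_N) is uniformly distributed on {−1,+1}^N independently of S. -/
/-!
Introduce a ghost sample `X'`, independent of `X` with the same law. The population mean of `g` is
the expectation of its empirical mean on `X'`, and a supremum of expectations is at most the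
expectation of the supremum, so the expected uniform deviation is bounded by the expectation of
the supremum over `g` of the difference of the empirical means on `X'` and on `X`. The joint law
of `(X, X')` is invariant under exchanging `X i` and `X' i` on any set of indices, so random signs
may be inserted for free; averaging over the signs and splitting the supremum of the sum into two
suprema gives twice the Rademacher complexity.
-/

open MeasureTheory

section SupIntegral

variable {Ω ι : Type*} [MeasurableSpace Ω] {ν : Measure Ω}

theorem MeasureTheory.Integrable.finset_sup' {s : Finset ι} (hs : s.Nonempty) {F : ι → Ω → ℝ}
    (hF : ∀ i ∈ s, Integrable (F i) ν) : Integrable (fun ω => s.sup' hs fun i => F i ω) ν := by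
  convert Finset.sup'_induction (p := (Integrable · ν)) hs F (fun _ h₁ _ h₂ => h₁.sup h₂) hF
  exact (Finset.sup'_apply hs F _).symm

theorem Finset.sup'_integral_le_integral_sup' {s : Finset ι} (hs : s.Nonempty) {F : ι → Ω → ℝ}
    (hF : ∀ i ∈ s, Integrable (F i) ν) :
    (s.sup' hs fun i => ∫ ω, F i ω ∂ν) ≤ ∫ ω, (s.sup' hs fun i => F i ω) ∂ν :=
  Finset.sup'_le _ _ fun i hi =>
    integral_mono (hF i hi) (Integrable.finset_sup' hs hF) fun ω => Finset.le_sup' (F · ω) hi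

theorem integral_sup'_sub_le_integral_prod_sup'_sub [IsProbabilityMeasure ν] {s : Finset ι}
    (hs : s.Nonempty) {F : ι → Ω → ℝ} (hF : ∀ i ∈ s, Integrable (F i) ν) :
    ∫ ω, (s.sup' hs fun i => (∫ ω', F i ω' ∂ν) - F i ω) ∂ν
      ≤ ∫ p, (s.sup' hs fun i => F i p.2 - F i p.1) ∂(ν.prod ν) := by
  have hψ : Integrable (fun p : Ω × Ω => s.sup' hs fun i => F i p.2 - F i p.1) (ν.prod ν) :=
    Integrable.finset_sup' hs fun i hi => ((hF i hi).comp_snd ν).sub ((hF i hi).comp_fst ν)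
  rw [integral_prod _ hψ]
  refine integral_mono (Integrable.finset_sup' hs fun i hi => (integrable_const _).sub (hF i hi))
    hψ.integral_prod_left fun ω => ?_
  calc (s.sup' hs fun i => (∫ ω', F i ω' ∂ν) - F i ω)
      = s.sup' hs fun i => ∫ ω', (F i ω' - F i ω) ∂ν :=
        Finset.sup'_congr hs rfl fun i hi => by
          rw [integral_sub (hF i hi) (integrable_const _), integral_const, probReal_univ, one_smul]
    _ ≤ _ := Finset.sup'_integral_le_integral_sup' hs fun i hi => (hF i hi).sub (integrable_const _)

end SupIntegral

noncomputable section Empirical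

variable {α : Type*} {N : ℕ}

def swapAt {ι : Type*} (σ : ι → Bool) (p : (ι → α) × (ι → α)) : (ι → α) × (ι → α) :=
  (fun i => if σ i then p.1 i else p.2 i, fun i => if σ i then p.2 i else p.1 i)

def empiricalMean (g : α → ℝ) (X : Fin N → α) : ℝ := (1 / N) * ∑ i, g (X i)

def signedMean (σ : Fin N → Bool) (g : α → ℝ) (X : Fin N → α) : ℝ :=
  (1 / N) * ∑ i, (if σ i then (1 : ℝ) else -1) * g (X i)

def empiricalRademacher (G : Finset (α → ℝ)) (hG : G.Nonempty) (X : Fin N → α) : ℝ :=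
  (∑ σ : Fin N → Bool, G.sup' hG fun g => signedMean σ g X) / 2 ^ N

theorem empiricalMean_swapAt_sub (σ : Fin N → Bool) (g : α → ℝ)
    (p : (Fin N → α) × (Fin N → α)) :
    empiricalMean g (swapAt σ p).2 - empiricalMean g (swapAt σ p).1
      = signedMean σ g p.2 + signedMean (fun i => !σ i) g p.1 := by
  simp only [empiricalMean, signedMean, ← mul_sub, ← mul_add, ← Finset.sum_sub_distrib,
    ← Finset.sum_add_distrib]
  congr 1
  refine Finset.sum_congr rfl fun i _ => ?_
  by_cases h : σ i <;> simp [swapAt, h] <;> ring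

theorem sum_sup'_swapAt_div_le_empiricalRademacher_add (G : Finset (α → ℝ)) (hG : G.Nonempty)
    (p : (Fin N → α) × (Fin N → α)) :
    (∑ σ : Fin N → Bool, G.sup' hG fun g =>
        empiricalMean g (swapAt σ p).2 - empiricalMean g (swapAt σ p).1) / 2 ^ N
      ≤ empiricalRademacher G hG p.2 + empiricalRademacher G hG p.1 := by
  have hsplit (σ : Fin N → Bool) : (G.sup' hG fun g =>
      empiricalMean g (swapAt σ p).2 - empiricalMean g (swapAt σ p).1)
        ≤ (G.sup' hG fun g => signedMean σ g p.2)
          + G.sup' hG fun g => signedMean (fun i => !σ i) g p.1 :=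
    Finset.sup'_le _ _ fun g hg => by
      rw [empiricalMean_swapAt_sub]
      exact add_le_add (Finset.le_sup' (signedMean σ · p.2) hg)
        (Finset.le_sup' (signedMean (fun i => !σ i) · p.1) hg)
  have hneg : (∑ σ : Fin N → Bool, G.sup' hG fun g => signedMean (fun i => !σ i) g p.1)
      = ∑ σ : Fin N → Bool, G.sup' hG fun g => signedMean σ g p.1 :=
    Fintype.sum_bijective _ (Function.Involutive.bijective fun σ => by simp) _ _ fun _ => rfl
  rw [empiricalRademacher, empiricalRademacher, ← add_div, ← hneg, ← Finset.sum_add_distrib]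
  gcongr with σ
  exact hsplit σ

variable [MeasurableSpace α]

theorem measurePreserving_swapAt {ι : Type*} [Fintype ι] (μ : ι → Measure α)
    [∀ i, SigmaFinite (μ i)] (σ : ι → Bool) :
    MeasurePreserving (swapAt σ) ((Measure.pi μ).prod (Measure.pi μ))
      ((Measure.pi μ).prod (Measure.pi μ)) := by
  -- Seen on `ι → α × α`, `swapAt σ` acts coordinatewise by `id` or `Prod.swap`.
  have he := measurePreserving_arrowProdEquivProdArrow α α ι μ μ
  have hT : MeasurePreserving (fun (w : ι → α × α) i => if σ i then w i else (w i).swap)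
      (Measure.pi fun i => (μ i).prod (μ i)) (Measure.pi fun i => (μ i).prod (μ i)) :=
    measurePreserving_pi (f := fun i (q : α × α) => if σ i then q else q.swap) _ _ fun i => by
      by_cases h : σ i
      · simp only [h, if_true]
        exact MeasurePreserving.id _
      · simpa [h] using Measure.measurePreserving_swap (μ := μ i) (ν := μ i)
  convert he.comp (hT.comp he.symm) using 1
  ext p i <;> by_cases h : σ i <;> simp [swapAt, h, MeasurableEquiv.arrowProdEquivProdArrow]

variable {μ : Measure α}

theorem integrable_empiricalMean [IsFiniteMeasure μ] {g : α → ℝ} (hg : Integrable g μ) :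
    Integrable (empiricalMean g) (Measure.pi fun _ : Fin N => μ) :=
  (integrable_finsetSum _ fun _ _ => integrable_comp_eval hg).const_mul _

theorem integral_empiricalMean [IsProbabilityMeasure μ] (hN : N ≠ 0) {g : α → ℝ}
    (hg : Integrable g μ) :
    ∫ X, empiricalMean g X ∂(Measure.pi fun _ : Fin N => μ) = ∫ a, g a ∂μ := by
  simp only [empiricalMean]
  rw [integral_const_mul, integral_finsetSum _ fun _ _ => integrable_comp_eval hg]
  simp only [integral_comp_eval (μ := fun _ => μ) hg.aestronglyMeasurable, Finset.sum_const,
    Finset.card_univ, Fintype.card_fin, nsmul_eq_mul]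
  field_simp

theorem integrable_empiricalRademacher [IsFiniteMeasure μ] {G : Finset (α → ℝ)}
    (hG : G.Nonempty) (hint : ∀ g ∈ G, Integrable g μ) :
    Integrable (empiricalRademacher G hG) (Measure.pi fun _ : Fin N => μ) :=
  (integrable_finsetSum _ fun _ _ => Integrable.finset_sup' hG fun g hg =>
    (integrable_finsetSum _ fun _ _ => (integrable_comp_eval (hint g hg)).const_mul _).const_mul _
    ).div_const _

theorem integral_sup'_empiricalMean_sub_le_two_mul_integral_empiricalRademacher
    [IsProbabilityMeasure μ] {G : Finset (α → ℝ)} (hG : G.Nonempty)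
    (hint : ∀ g ∈ G, Integrable g μ) :
    ∫ p, (G.sup' hG fun g => empiricalMean g p.2 - empiricalMean g p.1)
        ∂((Measure.pi fun _ : Fin N => μ).prod (Measure.pi fun _ : Fin N => μ))
      ≤ 2 * ∫ X, empiricalRademacher G hG X ∂(Measure.pi fun _ : Fin N => μ) := by
  set ν := Measure.pi fun _ : Fin N => μ
  set ψ : (Fin N → α) × (Fin N → α) → ℝ :=
    fun p => G.sup' hG fun g => empiricalMean g p.2 - empiricalMean g p.1
  have hψ : Integrable ψ (ν.prod ν) := Integrable.finset_sup' hG fun g hg =>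
    ((integrable_empiricalMean (hint g hg)).comp_snd ν).sub
      ((integrable_empiricalMean (hint g hg)).comp_fst ν)
  have hswap (σ : Fin N → Bool) : MeasurePreserving (swapAt σ) (ν.prod ν) (ν.prod ν) :=
    measurePreserving_swapAt _ σ
  have hψσ (σ : Fin N → Bool) : Integrable (fun p => ψ (swapAt σ p)) (ν.prod ν) :=
    (hswap σ).integrable_comp_of_integrable hψ
  have hinv (σ : Fin N → Bool) : ∫ p, ψ (swapAt σ p) ∂(ν.prod ν) = ∫ p, ψ p ∂(ν.prod ν) := by
    rw [← integral_map (hswap σ).aemeasurable (by rw [(hswap σ).map_eq]; exact hψ.1),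
      (hswap σ).map_eq]
  have hR := integrable_empiricalRademacher (N := N) hG hint
  calc ∫ p, ψ p ∂(ν.prod ν)
      = ∫ p, (∑ σ : Fin N → Bool, ψ (swapAt σ p)) / 2 ^ N ∂(ν.prod ν) := by
        rw [integral_div, integral_finsetSum _ fun σ _ => hψσ σ]
        simp [hinv]
    _ ≤ ∫ p, (empiricalRademacher G hG p.2 + empiricalRademacher G hG p.1) ∂(ν.prod ν) :=
        integral_mono ((integrable_finsetSum _ fun σ _ => hψσ σ).div_const _)
          ((hR.comp_snd ν).add (hR.comp_fst ν))
          (sum_sup'_swapAt_div_le_empiricalRademacher_add G hG)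
    _ = 2 * ∫ X, empiricalRademacher G hG X ∂ν := by
        rw [integral_add (hR.comp_snd ν) (hR.comp_fst ν), integral_fun_snd, integral_fun_fst,
          probReal_univ, one_smul, two_mul]

end Empirical

/-- Symmetrization: the expected uniform deviation of the empirical loss from
the population loss over a finite nonempty family `G` of bounded measurable
functions is at most twice the expected empirical Rademacher complexity of
`G`, where the Rademacher expectation is the average over all `2^N` sign
vectors. -/
theorem symmetrization
    {α : Type*} [MeasurableSpace α] (μ : Measure α) [IsProbabilityMeasure μ]
    (G : Finset (α → ℝ)) (hG : G.Nonempty)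
    (hmeas : ∀ g ∈ G, Measurable g)
    (hbdd : ∀ g ∈ G, ∃ C : ℝ, ∀ x, |g x| ≤ C)
    (N : ℕ) (hN : 0 < N) :
    (∫ X : Fin N → α, (G.sup' hG fun g => (∫ a, g a ∂μ) - (1 / N) * ∑ i, g (X i))
        ∂(Measure.pi fun _ : Fin N => μ))
      ≤ 2 * ∫ X : Fin N → α, (∑ σ : Fin N → Bool, G.sup' hG fun g =>
            (1 / N) * ∑ i, (if σ i then (1 : ℝ) else -1) * g (X i)) / 2 ^ N
          ∂(Measure.pi fun _ : Fin N => μ) := by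
  have hint : ∀ g ∈ G, Integrable g μ := fun g hg => by
    obtain ⟨C, hC⟩ := hbdd g hg
    exact Integrable.of_bound (hmeas g hg).aestronglyMeasurable C (ae_of_all _ hC)
  have hmean (X : Fin N → α) :
      (G.sup' hG fun g => (∫ a, g a ∂μ) - (1 / N) * ∑ i, g (X i))
        = G.sup' hG fun g =>
          (∫ X', empiricalMean g X' ∂(Measure.pi fun _ => μ)) - empiricalMean g X :=
    Finset.sup'_congr hG rfl fun g hg => by rw [integral_empiricalMean hN.ne' (hint g hg)]; rfl
  simp_rw [hmean]
  exact (integral_sup'_sub_le_integral_prod_sup'_sub hG fun g hg =>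
    integrable_empiricalMean (hint g hg)).trans
      (integral_sup'_empiricalMean_sub_le_two_mul_integral_empiricalRademacher hG hint)
end
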